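/- Fix k ∈ (0,1), an integer m ≥ 1, let q = 1/(1−k) − √(1/(1−k)² − 1) ∈ (0,1), let A_m be the (m+1)×(m+1) correlation defined from B_m, and let 0 < ε < q. Then every local dimension d for which A_m can be generated with local dimension d under depolarizing noise of strength λ = q − ε satisfies d ≥ (1/(1−q+ε))·( ((1−q)/2)·√(2q²/(ε(1+q))) − q + ε ). In particular C_{q−ε}(A_m) = Ω(ε^{−1/2}). -/

import Mathlib

open Matrix BigOperators Finset
open scoped Kronecker ComplexOrder

noncomputable section

/-- The effect of the depolarizing channel on a measurement effect (Heisenberg picture). -/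
def noisyEffect {d : ℕ} (lam : ℝ) (E : Matrix (Fin d) (Fin d) ℂ) : Matrix (Fin d) (Fin d) ℂ :=
  ((1 - lam : ℝ) : ℂ) • E + ((lam : ℂ) * E.trace / (d : ℂ)) • (1 : Matrix (Fin d) (Fin d) ℂ)

/-- A POVM on ℂ^d with n outcomes. -/
def IsPOVM {d n : ℕ} (E : Fin n → Matrix (Fin d) (Fin d) ℂ) : Prop :=
  (∀ x, (E x).PosSemidef) ∧ ∑ x, E x = 1

/-- P is generated with local dimension d under depolarizing noise of strength lam. -/
def GeneratesWithNoise {n : ℕ} (P : Matrix (Fin n) (Fin n) ℝ) (lam : ℝ) (d : ℕ) : Prop :=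
  ∃ (σ : Matrix (Fin d × Fin d) (Fin d × Fin d) ℂ)
    (E F : Fin n → Matrix (Fin d) (Fin d) ℂ),
    σ.PosSemidef ∧ σ.trace = 1 ∧ IsPOVM E ∧ IsPOVM F ∧
    ∀ x y, (P x y : ℂ) =
      ((noisyEffect lam (E x) ⊗ₖ noisyEffect lam (F y)) * σ).trace

/-- The matrix P̂_λ^{s,t}. -/
def Phat {n : ℕ} (P : Matrix (Fin n) (Fin n) ℝ) (lam : ℝ) (s t : Fin n → ℝ)
    (x y : Fin n) : ℝ :=
  P x y - lam * s x * (∑ a, P a y) - lam * t y * (∑ b, P x b) + lam ^ 2 * s x * t y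

/-- Nonnegative rank. -/
def NonnegRank {m n : ℕ} (P : Matrix (Fin m) (Fin n) ℝ) : ℕ :=
  sInf {r : ℕ | ∃ (u : Fin r → Fin m → ℝ) (v : Fin r → Fin n → ℝ),
    (∀ i x, 0 ≤ u i x) ∧ (∀ i y, 0 ≤ v i y) ∧ ∀ x y, P x y = ∑ i, u i x * v i y}

/-- PSD rank. -/
def PsdRank {m n : ℕ} (M : Matrix (Fin m) (Fin n) ℝ) : ℕ :=
  sInf {r : ℕ | ∃ (C : Fin m → Matrix (Fin r) (Fin r) ℂ)
    (D : Fin n → Matrix (Fin r) (Fin r) ℂ),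
    (∀ x, (C x).PosSemidef) ∧ (∀ y, (D y).PosSemidef) ∧
    ∀ x y, (M x y : ℂ) = (C x * D y).trace}

def outerProj {α : Type*} [Fintype α] (ψ : α → ℂ) : Matrix α α ℂ :=
  Matrix.of fun i j => ψ i * (starRingEnd ℂ) (ψ j)

def qval (k : ℝ) : ℝ := 1 / (1 - k) - Real.sqrt (1 / (1 - k) ^ 2 - 1)

def Bmat (m : ℕ) (k : ℝ) : Matrix (Fin m) (Fin m) ℝ :=
  Matrix.of fun x y =>
    (1 / (m : ℝ) ^ 2) * (1 - k * Real.cos (2 * Real.pi * ((x.val : ℝ) + (y.val : ℝ)) / m))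

def Amat (m : ℕ) (k : ℝ) : Matrix (Fin (m + 1)) (Fin (m + 1)) ℝ :=
  Matrix.of fun x y =>
    if x.val = 0 then
      (if y.val = 0 then (1 - qval k) ^ 2 / 2 else qval k * (1 - qval k) / (2 * m))
    else if y.val = 0 then qval k * (1 - qval k) / (2 * m)
    else ((1 + (qval k) ^ 2) / 2) *
      ((1 / (m : ℝ) ^ 2) *
        (1 - k * Real.cos (2 * Real.pi * (((x.val : ℝ) - 1) + ((y.val : ℝ) - 1)) / m)))

def IsElPsdFactorization {n : ℕ} (P : Matrix (Fin n) (Fin n) ℝ) (lam : ℝ) (r : ℕ)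
    (C D : Fin n → Matrix (Fin r) (Fin r) ℂ) : Prop :=
  (∀ x, (C x).PosSemidef) ∧ (∀ y, (D y).PosSemidef) ∧
  (∀ x y, (P x y : ℂ) = (C x * D y).trace) ∧
  IsUnit (∑ k, C k) ∧ IsUnit (∑ k, D k) ∧
  (∀ x, (C x - (((lam : ℂ) / r) * (C x * (∑ k, C k)⁻¹).trace) • (∑ k, C k)).PosSemidef) ∧
  (∀ y, (D y - (((lam : ℂ) / r) * (D y * (∑ k, D k)⁻¹).trace) • (∑ k, D k)).PosSemidef)

/-!
Only the entry `(0, 0)` of `A_m`, its row and its column matter. Let `a`, `b`, `Q` be the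
expectations of `E₀ ⊗ 1`, `1 ⊗ F₀`, `E₀ ⊗ F₀` in `σ`, and `u = λ tr E₀ / d`, `v = λ tr F₀ / d`
the weights of the identity in the noisy effects. The row, column and entry equations give
`μ² = (1 - λ)² (Q - a b)` with `μ = (1 - q) / 2`, and `Q ≤ min a b` then forces `u v ≤ μ ε`.
On the other hand `E₀ ≤ (tr E₀) • 1` gives `a ≤ tr E₀`, so the row equation yields
`λ μ ≤ ((1 - λ) d + λ) u`, and likewise for `v`. Multiplying, `((1 - λ) d + λ)² ≥ λ² μ / ε`.
With `λ = q - ε` this dominates the square of the claimed bound whenever that bound exceeds `1`,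
and `(1 - λ) d + λ ≥ 1` covers the remaining case.
-/

namespace Matrix

section Kronecker

variable {α l m n p : Type*} [NonUnitalNonAssocRing α]

theorem kronecker_sub (A : Matrix l m α) (B₁ B₂ : Matrix n p α) :
    A ⊗ₖ (B₁ - B₂) = A ⊗ₖ B₁ - A ⊗ₖ B₂ := by
  ext ⟨i, j⟩ ⟨k, k'⟩
  simp [mul_sub]

theorem sub_kronecker (A₁ A₂ : Matrix l m α) (B : Matrix n p α) :
    (A₁ - A₂) ⊗ₖ B = A₁ ⊗ₖ B - A₂ ⊗ₖ B := by
  ext ⟨i, j⟩ ⟨k, k'⟩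
  simp [sub_mul]

theorem kronecker_sum {ι : Type*} (s : Finset ι) (A : Matrix l m α) (B : ι → Matrix n p α) :
    A ⊗ₖ (∑ i ∈ s, B i) = ∑ i ∈ s, A ⊗ₖ B i := by
  ext ⟨i, j⟩ ⟨k, k'⟩
  simp [sum_apply, Finset.mul_sum]

theorem sum_kronecker {ι : Type*} (s : Finset ι) (A : ι → Matrix l m α) (B : Matrix n p α) :
    (∑ i ∈ s, A i) ⊗ₖ B = ∑ i ∈ s, A i ⊗ₖ B := by
  ext ⟨i, j⟩ ⟨k, k'⟩
  simp [sum_apply, Finset.sum_mul]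

end Kronecker

section Trace

variable {𝕜 n : Type*} [RCLike 𝕜] [Fintype n]

theorem PosSemidef.trace_mul_nonneg {A B : Matrix n n 𝕜} (hA : A.PosSemidef)
    (hB : B.PosSemidef) : 0 ≤ (A * B).trace := by
  classical
  open scoped MatrixOrder in
  obtain ⟨C, rfl⟩ := CStarAlgebra.nonneg_iff_eq_star_mul_self.mp hB.nonneg
  rw [← Matrix.mul_assoc, trace_mul_cycle]
  simpa [star_eq_conjTranspose] using (hA.mul_mul_conjTranspose_same C).trace_nonneg

open scoped MatrixOrder in
theorem PosSemidef.posSemidef_trace_smul_one_sub [DecidableEq n] {A : Matrix n n 𝕜}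
    (hA : A.PosSemidef) : (A.trace • 1 - A).PosSemidef := by
  have htr : A.trace = algebraMap ℝ 𝕜 (∑ i, hA.1.eigenvalues i) := by
    simp [hA.1.trace_eq_sum_eigenvalues]
  have hle : A ≤ algebraMap ℝ (Matrix n n 𝕜) (∑ i, hA.1.eigenvalues i) := by
    refine le_algebraMap_of_spectrum_le fun r hr => ?_
    rw [hA.1.spectrum_real_eq_range_eigenvalues] at hr
    obtain ⟨i, rfl⟩ := hr
    exact Finset.single_le_sum (fun j _ => hA.eigenvalues_nonneg j) (Finset.mem_univ i)
  rw [htr, ← Matrix.le_iff, algebraMap_smul]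
  rwa [Algebra.algebraMap_eq_smul_one] at hle

theorem trace_mul_le_trace_mul {X Y σ : Matrix n n 𝕜}
    (hXY : (Y - X).PosSemidef) (hσ : σ.PosSemidef) : (X * σ).trace ≤ (Y * σ).trace := by
  simpa [Matrix.sub_mul] using hXY.trace_mul_nonneg hσ

variable {m : Type*} [Fintype m] {σ : Matrix (n × m) (n × m) 𝕜}

theorem trace_kronecker_mul_le_trace_kronecker_one_mul [DecidableEq m] {A : Matrix n n 𝕜}
    {B : Matrix m m 𝕜} (hA : A.PosSemidef) (hB : (1 - B).PosSemidef) (hσ : σ.PosSemidef) :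
    ((A ⊗ₖ B) * σ).trace ≤ ((A ⊗ₖ 1) * σ).trace :=
  trace_mul_le_trace_mul (by simpa [kronecker_sub] using hA.kronecker hB) hσ

theorem trace_kronecker_mul_le_trace_one_kronecker_mul [DecidableEq n] {A : Matrix n n 𝕜}
    {B : Matrix m m 𝕜} (hA : (1 - A).PosSemidef) (hB : B.PosSemidef) (hσ : σ.PosSemidef) :
    ((A ⊗ₖ B) * σ).trace ≤ ((1 ⊗ₖ B) * σ).trace :=
  trace_mul_le_trace_mul (by simpa [sub_kronecker] using hA.kronecker hB) hσ

theorem trace_kronecker_one_mul_le_trace [DecidableEq n] [DecidableEq m] {A : Matrix n n 𝕜}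
    (hA : A.PosSemidef) (hσ : σ.PosSemidef) (hσ1 : σ.trace = 1) :
    ((A ⊗ₖ (1 : Matrix m m 𝕜)) * σ).trace ≤ A.trace := by
  simpa [hσ1] using trace_mul_le_trace_mul (X := A ⊗ₖ 1) (Y := A.trace • 1)
    (by simpa [sub_kronecker, smul_kronecker, one_kronecker_one] using
      hA.posSemidef_trace_smul_one_sub.kronecker (PosSemidef.one (n := m))) hσ

theorem trace_one_kronecker_mul_le_trace [DecidableEq n] [DecidableEq m] {B : Matrix m m 𝕜}
    (hB : B.PosSemidef) (hσ : σ.PosSemidef) (hσ1 : σ.trace = 1) :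
    (((1 : Matrix n n 𝕜) ⊗ₖ B) * σ).trace ≤ B.trace := by
  simpa [hσ1] using trace_mul_le_trace_mul (X := 1 ⊗ₖ B) (Y := B.trace • 1)
    (by simpa [kronecker_sub, kronecker_smul, one_kronecker_one] using
      (PosSemidef.one (n := n)).kronecker hB.posSemidef_trace_smul_one_sub) hσ

end Trace

end Matrix

section NoisyProtocol

variable {d n : ℕ}

theorem IsPOVM.posSemidef_one_sub {E : Fin n → Matrix (Fin d) (Fin d) ℂ} (hE : IsPOVM E)
    (x : Fin n) : (1 - E x).PosSemidef := by
  rw [← hE.2, ← Finset.sum_erase_add _ _ (Finset.mem_univ x), add_sub_cancel_right]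
  exact posSemidef_sum _ fun y _ => hE.1 y

theorem IsPOVM.sum_noisyEffect {E : Fin n → Matrix (Fin d) (Fin d) ℂ} (hE : IsPOVM E)
    (hd : d ≠ 0) (lam : ℝ) : ∑ x, noisyEffect lam (E x) = 1 := by
  simp only [noisyEffect, Finset.sum_add_distrib, ← Finset.smul_sum, ← Finset.sum_smul,
    ← Finset.sum_div, ← Finset.mul_sum, ← trace_sum, hE.2, trace_one, Fintype.card_fin,
    mul_div_assoc, div_self (Nat.cast_ne_zero.mpr hd : (d : ℂ) ≠ 0), mul_one, ← add_smul]
  norm_num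

variable (lam : ℝ) (σ : Matrix (Fin d × Fin d) (Fin d × Fin d) ℂ) (E F : Matrix (Fin d) (Fin d) ℂ)

theorem trace_noisyEffect_kronecker_one_mul (hσ : σ.trace = 1) :
    ((noisyEffect lam E ⊗ₖ 1) * σ).trace =
      (1 - lam) * ((E ⊗ₖ 1) * σ).trace + lam * E.trace / d := by
  simp only [noisyEffect, add_kronecker, smul_kronecker, one_kronecker_one, Matrix.add_mul,
    Matrix.smul_mul, Matrix.one_mul, trace_add, trace_smul, smul_eq_mul, hσ]
  push_cast
  ring

theorem trace_one_kronecker_noisyEffect_mul (hσ : σ.trace = 1) :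
    ((1 ⊗ₖ noisyEffect lam F) * σ).trace =
      (1 - lam) * ((1 ⊗ₖ F) * σ).trace + lam * F.trace / d := by
  simp only [noisyEffect, kronecker_add, kronecker_smul, one_kronecker_one, Matrix.add_mul,
    Matrix.smul_mul, Matrix.one_mul, trace_add, trace_smul, smul_eq_mul, hσ]
  push_cast
  ring

theorem trace_noisyEffect_kronecker_noisyEffect_mul (hσ : σ.trace = 1) :
    ((noisyEffect lam E ⊗ₖ noisyEffect lam F) * σ).trace =
      (1 - lam) ^ 2 * ((E ⊗ₖ F) * σ).trace
        + (1 - lam) * ((lam * F.trace / d) * ((E ⊗ₖ 1) * σ).trace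
          + (lam * E.trace / d) * ((1 ⊗ₖ F) * σ).trace)
        + (lam * E.trace / d) * (lam * F.trace / d) := by
  simp only [noisyEffect, add_kronecker, kronecker_add, smul_kronecker, kronecker_smul,
    one_kronecker_one, Matrix.add_mul, Matrix.smul_mul, Matrix.one_mul, trace_add, trace_smul,
    smul_eq_mul, hσ]
  push_cast
  ring

end NoisyProtocol

theorem GeneratesWithNoise.exists_scalar_model {d n : ℕ} {P : Matrix (Fin n) (Fin n) ℝ}
    {lam : ℝ} (h : GeneratesWithNoise P lam d) (x y : Fin n) :
    0 < d ∧ ∃ a b Q s t : ℝ, 0 ≤ s ∧ 0 ≤ t ∧ Q ≤ a ∧ Q ≤ b ∧ a ≤ s ∧ b ≤ t ∧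
      ∑ y', P x y' = (1 - lam) * a + lam * s / d ∧
      ∑ x', P x' y = (1 - lam) * b + lam * t / d ∧
      P x y = (1 - lam) ^ 2 * Q + (1 - lam) * ((lam * t / d) * a + (lam * s / d) * b)
        + (lam * s / d) * (lam * t / d) := by
  obtain ⟨σ, E, F, hσ, hσtr, hE, hF, hP⟩ := h
  have hd : d ≠ 0 := by
    rintro rfl
    simp [trace] at hσtr
  have hreal : ∀ z : ℂ, 0 ≤ z → z = z.re := fun z hz =>
    Complex.eq_re_of_ofReal_le (r := 0) (by rwa [Complex.ofReal_zero])
  have hI : (1 : Matrix (Fin d) (Fin d) ℂ).PosSemidef := .one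
  have ha := hreal _ (((hE.1 x).kronecker hI).trace_mul_nonneg hσ)
  have hb := hreal _ ((hI.kronecker (hF.1 y)).trace_mul_nonneg hσ)
  have hQ := hreal _ (((hE.1 x).kronecker (hF.1 y)).trace_mul_nonneg hσ)
  have hs := hreal _ (hE.1 x).trace_nonneg
  have ht := hreal _ (hF.1 y).trace_nonneg
  refine ⟨Nat.pos_of_ne_zero hd, ((E x ⊗ₖ 1) * σ).trace.re, ((1 ⊗ₖ F y) * σ).trace.re,
    ((E x ⊗ₖ F y) * σ).trace.re, (E x).trace.re, (F y).trace.re, ?_, ?_, ?_, ?_, ?_, ?_, ?_, ?_, ?_⟩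
  · exact (Complex.nonneg_iff.1 (hE.1 x).trace_nonneg).1
  · exact (Complex.nonneg_iff.1 (hF.1 y).trace_nonneg).1
  · exact (Complex.le_def.1 <|
      trace_kronecker_mul_le_trace_kronecker_one_mul (hE.1 x) (hF.posSemidef_one_sub y) hσ).1
  · exact (Complex.le_def.1 <|
      trace_kronecker_mul_le_trace_one_kronecker_mul (hE.posSemidef_one_sub x) (hF.1 y) hσ).1
  · exact (Complex.le_def.1 <| trace_kronecker_one_mul_le_trace (hE.1 x) hσ hσtr).1
  · exact (Complex.le_def.1 <| trace_one_kronecker_mul_le_trace (hF.1 y) hσ hσtr).1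
  · have hrow : ∑ y', (P x y' : ℂ) =
        (1 - lam) * ((E x ⊗ₖ 1) * σ).trace + lam * (E x).trace / d := by
      simp_rw [hP x, ← trace_sum, ← Finset.sum_mul, ← kronecker_sum, hF.sum_noisyEffect hd]
      exact trace_noisyEffect_kronecker_one_mul lam σ (E x) hσtr
    rw [ha, hs] at hrow
    exact_mod_cast hrow
  · have hcol : ∑ x', (P x' y : ℂ) =
        (1 - lam) * ((1 ⊗ₖ F y) * σ).trace + lam * (F y).trace / d := by
      simp_rw [hP _ y, ← trace_sum, ← Finset.sum_mul, ← sum_kronecker, hE.sum_noisyEffect hd]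
      exact trace_one_kronecker_noisyEffect_mul lam σ (F y) hσtr
    rw [hb, ht] at hcol
    exact_mod_cast hcol
  · have hxy := hP x y
    rw [trace_noisyEffect_kronecker_noisyEffect_mul lam σ (E x) (F y) hσtr, ha, hb, hQ, hs, ht]
      at hxy
    exact_mod_cast hxy

theorem mul_le_of_marginals {μ ε L a b Q u v : ℝ} (hε : 0 ≤ ε) (hu : 0 ≤ u) (hv : 0 ≤ v)
    (hL : L = 2 * μ + ε) (ha : μ = L * a + u) (hb : μ = L * b + v)
    (hQ : 2 * μ ^ 2 = L ^ 2 * Q + L * (v * a + u * b) + u * v) (hQa : Q ≤ a) (hQb : Q ≤ b) :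
    u * v ≤ μ * ε := by
  have hkey : μ ^ 2 = L ^ 2 * (Q - a * b) := by
    linear_combination hQ - μ * hb - (L * b + v) * ha
  have hua : μ ^ 2 ≤ (μ - u) * (μ + ε + v) :=
    calc μ ^ 2 = L ^ 2 * (Q - a * b) := hkey
      _ ≤ L ^ 2 * (a - a * b) := by gcongr
      _ = (μ - u) * (μ + ε + v) := by
        linear_combination -(μ + ε + v) * ha + L * a * hb + L * a * hL
  have hvb : μ ^ 2 ≤ (μ - v) * (μ + ε + u) :=
    calc μ ^ 2 = L ^ 2 * (Q - a * b) := hkey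
      _ ≤ L ^ 2 * (b - a * b) := by gcongr
      _ = (μ - v) * (μ + ε + u) := by
        linear_combination -(μ + ε + u) * hb + L * b * ha + L * b * hL
  nlinarith [mul_nonneg hε hu, mul_nonneg hε hv]

theorem half_one_sub_mul_sqrt_le {q ε K : ℝ} (hq0 : 0 < q) (hq1 : q < 1) (hε0 : 0 < ε)
    (hK : 1 ≤ K) (h : (q - ε) ^ 2 * (1 - q) ≤ 2 * ε * K ^ 2) :
    (1 - q) / 2 * √(2 * q ^ 2 / (ε * (1 + q))) ≤ K := by
  set S := (1 - q) / 2 * √(2 * q ^ 2 / (ε * (1 + q)))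
  have hS0 : 0 ≤ S := mul_nonneg (by linarith) (Real.sqrt_nonneg _)
  have hS2 : S ^ 2 * (2 * ε * (1 + q)) = q ^ 2 * (1 - q) ^ 2 := by
    rw [mul_pow, Real.sq_sqrt (by positivity)]
    field_simp
  rcases le_or_gt S 1 with hS1 | hS1
  · linarith
  have hsmall : 2 * ε * (1 + q) < q ^ 2 * (1 - q) ^ 2 := by
    rw [← hS2]
    exact lt_mul_left (by positivity) (one_lt_pow₀ hS1 two_ne_zero)
  have hlam : q ^ 2 * (1 - q) ≤ (q - ε) ^ 2 * (1 + q) := by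
    nlinarith [mul_lt_mul_of_pos_left hsmall hq0, pow_pos hq0 3, sq_nonneg ε]
  refine (pow_le_pow_iff_left₀ hS0 (by linarith) two_ne_zero).mp ?_
  refine le_of_mul_le_mul_right ?_ (show 0 < 2 * ε * (1 + q) by positivity)
  rw [hS2]
  nlinarith [mul_le_mul_of_nonneg_right h (show 0 ≤ 1 + q by linarith),
    mul_le_mul_of_nonneg_right hlam (show 0 ≤ 1 - q by linarith)]

theorem le_noisy_dimension_of_marginals {q ε d a b Q s t : ℝ} (hq0 : 0 < q) (hq1 : q < 1)
    (hε0 : 0 < ε) (hεq : ε < q) (hd : 1 ≤ d) (hs : 0 ≤ s) (ht : 0 ≤ t)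
    (hQa : Q ≤ a) (hQb : Q ≤ b) (has : a ≤ s) (hbt : b ≤ t)
    (hrow : (1 - q) / 2 = (1 - (q - ε)) * a + (q - ε) * s / d)
    (hcol : (1 - q) / 2 = (1 - (q - ε)) * b + (q - ε) * t / d)
    (hentry : (1 - q) ^ 2 / 2 = (1 - (q - ε)) ^ 2 * Q
      + (1 - (q - ε)) * (((q - ε) * t / d) * a + ((q - ε) * s / d) * b)
      + ((q - ε) * s / d) * ((q - ε) * t / d)) :
    (1 - q) / 2 * √(2 * q ^ 2 / (ε * (1 + q))) ≤ (1 - (q - ε)) * d + (q - ε) := by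
  set lam := q - ε with hlam_def
  set μ := (1 - q) / 2 with hμ_def
  set K := (1 - lam) * d + lam with hK_def
  set u := lam * s / d with hu_def
  set v := lam * t / d with hv_def
  have hd0 : 0 < d := by linarith
  have hlam : 0 < lam := by linarith
  have hL : 0 ≤ 1 - lam := by linarith
  have hμ : 0 < μ := by linarith
  have hu : 0 ≤ u := by positivity
  have hv : 0 ≤ v := by positivity
  have huv : u * v ≤ μ * ε :=
    mul_le_of_marginals hε0.le hu hv (by ring) hrow hcol (by linear_combination hentry)
      hQa hQb
  have hμu : lam * μ ≤ K * u :=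
    calc lam * μ = (1 - lam) * (lam * a) + lam * u := by rw [hrow]; ring
      _ ≤ (1 - lam) * (lam * s) + lam * u := by gcongr
      _ = K * u := by rw [hu_def]; field_simp; ring
  have hμv : lam * μ ≤ K * v :=
    calc lam * μ = (1 - lam) * (lam * b) + lam * v := by rw [hcol]; ring
      _ ≤ (1 - lam) * (lam * t) + lam * v := by gcongr
      _ = K * v := by rw [hv_def]; field_simp; ring
  have hsq : lam ^ 2 * μ ≤ K ^ 2 * ε := by
    refine le_of_mul_le_mul_right ?_ hμ
    calc lam ^ 2 * μ * μ = (lam * μ) * (lam * μ) := by ring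
      _ ≤ (K * u) * (K * v) := mul_le_mul hμu hμv (by positivity) (hμu.trans' (by positivity))
      _ = K ^ 2 * (u * v) := by ring
      _ ≤ K ^ 2 * (μ * ε) := by gcongr
      _ = K ^ 2 * ε * μ := by ring
  refine half_one_sub_mul_sqrt_le hq0 hq1 hε0 (by nlinarith) ?_
  linear_combination 2 * hsq

theorem qval_pos {k : ℝ} (hk1 : k < 1) : 0 < qval k := by
  have hc : 0 < 1 / (1 - k) := by apply one_div_pos.mpr; linarith
  rw [qval, sub_pos, Real.sqrt_lt' hc, _root_.one_div_pow]
  linarith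

theorem qval_lt_one {k : ℝ} (hk0 : 0 < k) (hk1 : k < 1) : qval k < 1 := by
  have hc : 1 < 1 / (1 - k) := by rw [lt_one_div one_pos (by linarith)]; linarith
  rw [qval, sub_lt_comm, Real.lt_sqrt (by linarith), ← _root_.one_div_pow]
  nlinarith

theorem Amat_zero_zero (m : ℕ) (k : ℝ) : Amat m k 0 0 = (1 - qval k) ^ 2 / 2 := by
  simp [Amat]

theorem sum_Amat_row_zero {m : ℕ} (hm : m ≠ 0) (k : ℝ) :
    ∑ y, Amat m k 0 y = (1 - qval k) / 2 := by
  simp [Fin.sum_univ_succ, Amat, Fin.succ_ne_zero]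
  field_simp
  ring

theorem sum_Amat_col_zero {m : ℕ} (hm : m ≠ 0) (k : ℝ) :
    ∑ x, Amat m k x 0 = (1 - qval k) / 2 := by
  simp [Fin.sum_univ_succ, Amat, Fin.succ_ne_zero]
  field_simp
  ring

/-- a lower bound of order ε^{−1/2} on every local dimension d of a noisy
quantum protocol generating A_m at noise strength λ = q − ε. -/
theorem Amat_dimension_lower_bound
    (k : ℝ) (hk0 : 0 < k) (hk1 : k < 1) (m : ℕ) (hm : 1 ≤ m)
    (ε : ℝ) (hε0 : 0 < ε) (hεq : ε < qval k)
    (d : ℕ) (hgen : GeneratesWithNoise (Amat m k) (qval k - ε) d) :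
    (1 / (1 - qval k + ε)) *
      (((1 - qval k) / 2) * Real.sqrt (2 * (qval k) ^ 2 / (ε * (1 + qval k)))
        - qval k + ε) ≤ (d : ℝ) := by
  obtain ⟨hd, a, b, Q, s, t, hs, ht, hQa, hQb, has, hbt, hrow, hcol, hentry⟩ :=
    hgen.exists_scalar_model 0 0
  rw [sum_Amat_row_zero (by omega)] at hrow
  rw [sum_Amat_col_zero (by omega)] at hcol
  rw [Amat_zero_zero] at hentry
  have hq1 := qval_lt_one hk0 hk1
  have hbound := le_noisy_dimension_of_marginals (qval_pos hk1) hq1 hε0 hεq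
    (by exact_mod_cast hd) hs ht hQa hQb has hbt hrow hcol hentry
  rw [one_div_mul_eq_div, div_le_iff₀ (by linarith)]
  linarith

end
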